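/- arXiv:1311.4171 — 6 statements merged into one kernel-verified Lean document; each statement's English description precedes it below -/
import Mathlib

section
/- Let α > 0, p > 1 + α. Suppose q ∈ ℝ, R > 0, L > 0, and f : (q-R, q+R) → [0,∞) is Borel with L/2 ≤ f ≤ 2L. Let 0 < r < R and g(x) = 2L·|(x-q)/r|^α, and define h = min{f, g} on (q-R, q+R). Then there is a constant C > 0 depending only on α and p such that for every interval I ⊆ (q-R, q+R) of positive length, (⨍_I h) · (⨍_I h^{1/(1-p)})^{p-1} ≤ C. -/
/-!
The function `h` is squeezed between `L / 2` and `2 L` times the rescaled weight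
`w (x) = min (1, |(x - q) / r| ^ α)`, so its `A_p` product on any interval is at most `4` times that
of `w`. The `A_p` product is invariant under translations and dilations, and taking the minimum of
two `A_p` weights costs at most a factor `2 ^ (p - 1)`; so it suffices that `1` and `|y| ^ α` are
`A_p` weights. For `|y| ^ α` on `[a, b]`, let `M = max |a| |b|` and `β = α / (p - 1) < 1`.
Then `⨍ |y| ^ α ≤ M ^ α`, and `⨍ |y| ^ (-β) ≤ 4 / (1 - β) · M ^ (-β)`: if `b - a < M / 2` then
`|y| ≥ M / 2` on `[a, b]`, and otherwise `[a, b] ⊆ [-M, M]` has length `≥ M / 2` and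
`|y| ^ (-β)` is integrable on `[-M, M]`. The powers of `M` cancel because `β (p - 1) = α`.
-/

open MeasureTheory Set intervalIntegral

lemma intervalIntegrable_abs_rpow {s : ℝ} (hs : -1 < s) (a b : ℝ) :
    IntervalIntegrable (fun y : ℝ => |y| ^ s) volume a b := by
  have from_zero_nonneg : ∀ c, 0 ≤ c →
      IntervalIntegrable (fun y : ℝ => |y| ^ s) volume 0 c := by
    intro c hc
    refine (intervalIntegrable_rpow' hs).congr fun y hy => ?_
    rw [uIoc_of_le hc] at hy
    simp only [abs_of_pos hy.1]
  have from_zero : ∀ c, IntervalIntegrable (fun y : ℝ => |y| ^ s) volume 0 c := by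
    intro c
    rcases le_total 0 c with hc | hc
    · exact from_zero_nonneg c hc
    · simpa using (IntervalIntegrable.iff_comp_neg).mp (from_zero_nonneg (-c) (by linarith))
  exact (from_zero a).symm.trans (from_zero b)

lemma integral_abs_rpow_neg_self {s : ℝ} (hs : -1 < s) {M : ℝ} (hM : 0 ≤ M) :
    ∫ y in (-M)..M, |y| ^ s = 2 * M ^ (s + 1) / (s + 1) := by
  have right : ∫ y in (0 : ℝ)..M, |y| ^ s = M ^ (s + 1) / (s + 1) := by
    rw [integral_congr (g := fun y => y ^ s) fun y hy => by
        rw [uIcc_of_le hM] at hy; simp only [abs_of_nonneg hy.1],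
      integral_rpow (Or.inl hs), Real.zero_rpow (by linarith)]
    ring
  have left : ∫ y in (-M)..0, |y| ^ s = M ^ (s + 1) / (s + 1) := by
    simpa [right] using (integral_comp_neg (a := 0) (b := M) fun y : ℝ => |y| ^ s).symm
  rw [← integral_add_adjacent_intervals (intervalIntegrable_abs_rpow hs _ _)
    (intervalIntegrable_abs_rpow hs _ _), left, right]
  ring

lemma max_abs_sub_le_abs_of_mem_Icc {a b y : ℝ} (hy : y ∈ Icc a b) :
    max |a| |b| - (b - a) ≤ |y| := by
  obtain ⟨hay, hyb⟩ := hy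
  rw [sub_le_iff_le_add]
  refine max_le ?_ ?_
  · cases abs_cases a <;> cases abs_cases y <;> linarith
  · cases abs_cases b <;> cases abs_cases y <;> linarith

lemma max_abs_pos_of_lt {a b : ℝ} (hab : a < b) : 0 < max |a| |b| :=
  lt_max_iff.2 <| by by_contra! h; linarith [abs_nonpos_iff.1 h.1, abs_nonpos_iff.1 h.2]

lemma inv_sub_mul_integral_le_of_forall_le {f : ℝ → ℝ} {a b C : ℝ} (hab : a < b)
    (hf : IntervalIntegrable f volume a b) (h : ∀ x ∈ Icc a b, f x ≤ C) :
    (b - a)⁻¹ * ∫ x in a..b, f x ≤ C := by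
  rw [inv_mul_le_iff₀ (sub_pos.2 hab)]
  simpa [mul_comm] using integral_mono_on hab.le hf intervalIntegrable_const h

lemma inv_sub_mul_integral_nonneg {f : ℝ → ℝ} {a b : ℝ} (hab : a < b)
    (hf : ∀ x ∈ Icc a b, 0 ≤ f x) : 0 ≤ (b - a)⁻¹ * ∫ x in a..b, f x :=
  mul_nonneg (inv_nonneg.2 (sub_pos.2 hab).le) (integral_nonneg hab.le hf)

lemma inv_sub_mul_integral_mono {f g : ℝ → ℝ} {a b : ℝ} (hab : a < b)
    (hf : IntervalIntegrable f volume a b) (hg : IntervalIntegrable g volume a b)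
    (h : ∀ x ∈ Icc a b, f x ≤ g x) :
    (b - a)⁻¹ * ∫ x in a..b, f x ≤ (b - a)⁻¹ * ∫ x in a..b, g x :=
  mul_le_mul_of_nonneg_left (integral_mono_on hab.le hf hg h) (inv_nonneg.2 (sub_pos.2 hab).le)

lemma inv_sub_mul_integral_abs_rpow_le {α a b : ℝ} (hα : 0 ≤ α) (hab : a < b) :
    (b - a)⁻¹ * ∫ y in a..b, |y| ^ α ≤ max |a| |b| ^ α :=
  inv_sub_mul_integral_le_of_forall_le hab (intervalIntegrable_abs_rpow (by linarith) a b)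
    fun _ hy => Real.rpow_le_rpow (abs_nonneg _) (abs_le_max_abs_abs hy.1 hy.2) hα

lemma inv_sub_mul_integral_abs_rpow_neg_le {β a b : ℝ} (hβ₀ : 0 ≤ β) (hβ₁ : β < 1)
    (hab : a < b) :
    (b - a)⁻¹ * ∫ y in a..b, |y| ^ (-β) ≤ 4 / (1 - β) * max |a| |b| ^ (-β) := by
  set M := max |a| |b|
  have hM : 0 < M := max_abs_pos_of_lt hab
  have h1β : 0 < 1 - β := by linarith
  rcases lt_or_ge (b - a) (M / 2) with hfar | hnear
  · calc (b - a)⁻¹ * ∫ y in a..b, |y| ^ (-β) ≤ (M / 2) ^ (-β) :=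
          inv_sub_mul_integral_le_of_forall_le hab (intervalIntegrable_abs_rpow (by linarith) a b)
            fun y hy => Real.rpow_le_rpow_of_nonpos (by positivity)
              (by linarith [max_abs_sub_le_abs_of_mem_Icc hy]) (by linarith)
      _ = 2 ^ β * M ^ (-β) := by
          rw [Real.div_rpow hM.le zero_le_two, Real.rpow_neg zero_le_two, div_inv_eq_mul,
            mul_comm]
      _ ≤ 4 / (1 - β) * M ^ (-β) := by
          gcongr
          calc (2 : ℝ) ^ β ≤ 2 ^ (1 : ℝ) := Real.rpow_le_rpow_of_exponent_le one_le_two hβ₁.le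
            _ ≤ 4 / (1 - β) := by
              rw [Real.rpow_one, le_div_iff₀ h1β]; linarith
  · have hint : ∫ y in a..b, |y| ^ (-β) ≤ 2 * M ^ (1 - β) / (1 - β) := by
      rw [show 1 - β = -β + 1 by ring, ← integral_abs_rpow_neg_self (by linarith) hM.le]
      exact integral_mono_interval (by linarith [neg_abs_le a, le_max_left |a| |b|]) hab.le
        (by linarith [le_abs_self b, le_max_right |a| |b|])
        (Filter.Eventually.of_forall fun y => Real.rpow_nonneg (abs_nonneg y) _)
        (intervalIntegrable_abs_rpow (by linarith) _ _)
    have hinv : (b - a)⁻¹ ≤ 2 / M := by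
      rw [← inv_div]; exact inv_anti₀ (by positivity) hnear
    calc (b - a)⁻¹ * ∫ y in a..b, |y| ^ (-β) ≤ 2 / M * (2 * M ^ (1 - β) / (1 - β)) :=
          mul_le_mul hinv hint (integral_nonneg hab.le fun y _ => by positivity) (by positivity)
      _ = 4 / (1 - β) * M ^ (-β) := by
          rw [show 1 - β = 1 + -β by ring, Real.rpow_add hM, Real.rpow_one]
          field_simp
          norm_num

noncomputable def apProduct (p : ℝ) (w : ℝ → ℝ) (a b : ℝ) : ℝ :=
  ((b - a)⁻¹ * ∫ x in a..b, w x) * ((b - a)⁻¹ * ∫ x in a..b, w x ^ (1 / (1 - p))) ^ (p - 1)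

/-- Where `w` vanishes, `w x ^ (1 / (1 - p))` is `0` (Lean's `0 ^ _`) rather than `∞`; this is
harmless for the weights below, which vanish only on null sets. -/
structure IsApWeight (p K : ℝ) (w : ℝ → ℝ) : Prop where
  measurable : Measurable w
  nonneg : ∀ x, 0 ≤ w x
  intervalIntegrable : ∀ a b, IntervalIntegrable w volume a b
  intervalIntegrable_rpow : ∀ a b, IntervalIntegrable (fun x => w x ^ (1 / (1 - p))) volume a b
  apProduct_le : ∀ a b, a < b → apProduct p w a b ≤ K

lemma apProduct_le_mul_rpow {p A B a b : ℝ} {w : ℝ → ℝ} (hp : 1 ≤ p)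
    (hA₀ : 0 ≤ (b - a)⁻¹ * ∫ x in a..b, w x) (hA : (b - a)⁻¹ * ∫ x in a..b, w x ≤ A)
    (hB₀ : 0 ≤ (b - a)⁻¹ * ∫ x in a..b, w x ^ (1 / (1 - p)))
    (hB : (b - a)⁻¹ * ∫ x in a..b, w x ^ (1 / (1 - p)) ≤ B) :
    apProduct p w a b ≤ A * B ^ (p - 1) :=
  mul_le_mul hA (Real.rpow_le_rpow hB₀ hB (by linarith)) (by positivity) (hA₀.trans hA)

lemma isApWeight_one (p : ℝ) : IsApWeight p 1 fun _ => 1 where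
  measurable := measurable_const
  nonneg _ := zero_le_one
  intervalIntegrable _ _ := intervalIntegrable_const
  intervalIntegrable_rpow _ _ := intervalIntegrable_const
  apProduct_le a b hab := by
    simp [apProduct, inv_mul_cancel₀ (sub_pos.2 hab).ne']

lemma isApWeight_abs_rpow {p α : ℝ} (hα : 0 ≤ α) (hαp : α < p - 1) :
    IsApWeight p ((4 / (1 - α / (p - 1))) ^ (p - 1)) fun y => |y| ^ α := by
  have hp : 0 < p - 1 := by linarith
  set β := α / (p - 1)
  have hβ₀ : 0 ≤ β := div_nonneg hα hp.le
  have hβ₁ : β < 1 := (div_lt_one hp).2 hαp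
  have hβα : β * (p - 1) = α := div_mul_cancel₀ α hp.ne'
  have hdual : (fun y : ℝ => (|y| ^ α) ^ (1 / (1 - p))) = fun y => |y| ^ (-β) := by
    ext y
    rw [← Real.rpow_mul (abs_nonneg y)]
    congr 1
    field_simp [show 1 - p ≠ 0 by linarith]
    linarith
  refine ⟨(continuous_abs.measurable).pow_const α, fun y => by positivity,
    intervalIntegrable_abs_rpow (by linarith), ?_, fun a b hab => ?_⟩
  · rw [hdual]; exact intervalIntegrable_abs_rpow (by linarith)
  set M := max |a| |b|
  have hM : 0 < M := max_abs_pos_of_lt hab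
  calc apProduct p (fun y => |y| ^ α) a b ≤ M ^ α * (4 / (1 - β) * M ^ (-β)) ^ (p - 1) := by
        refine apProduct_le_mul_rpow (by linarith)
          (inv_sub_mul_integral_nonneg hab fun y _ => by positivity)
          (inv_sub_mul_integral_abs_rpow_le hα hab) ?_ ?_
        all_goals simp only [congrFun hdual]
        · exact inv_sub_mul_integral_nonneg hab fun y _ => by positivity
        · exact inv_sub_mul_integral_abs_rpow_neg_le hβ₀ hβ₁ hab
    _ = (4 / (1 - β)) ^ (p - 1) * (M ^ α * M ^ (-α)) := by
        rw [Real.mul_rpow (div_pos four_pos (by linarith)).le (by positivity),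
          ← Real.rpow_mul hM.le,
          neg_mul, hβα]
        ring
    _ ≤ (4 / (1 - β)) ^ (p - 1) := by
        rw [← Real.rpow_add hM, add_neg_cancel, Real.rpow_zero, mul_one]

lemma min_rpow_le_rpow_add_rpow {u v s : ℝ} (hu : 0 ≤ u) (hv : 0 ≤ v) :
    min u v ^ s ≤ u ^ s + v ^ s := by
  rcases min_choice u v with h | h <;> rw [h]
  · exact le_add_of_nonneg_right (Real.rpow_nonneg hv s)
  · exact le_add_of_nonneg_left (Real.rpow_nonneg hu s)

lemma mul_rpow_le_two_rpow_mul_max {p A A₁ A₂ B B₁ B₂ : ℝ} (hp : 1 ≤ p) (hA : 0 ≤ A)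
    (hB : 0 ≤ B) (hB₁ : 0 ≤ B₁) (hB₂ : 0 ≤ B₂) (hA₁ : A ≤ A₁) (hA₂ : A ≤ A₂)
    (hBB : B ≤ B₁ + B₂) :
    A * B ^ (p - 1) ≤ 2 ^ (p - 1) * max (A₁ * B₁ ^ (p - 1)) (A₂ * B₂ ^ (p - 1)) := by
  wlog h₂₁ : B₂ ≤ B₁ generalizing A₁ A₂ B₁ B₂
  · rw [max_comm]; exact this hB₂ hB₁ hA₂ hA₁ (by linarith) (by linarith)
  calc A * B ^ (p - 1) ≤ A₁ * (2 * B₁) ^ (p - 1) :=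
        mul_le_mul hA₁ (Real.rpow_le_rpow hB (by linarith) (by linarith)) (by positivity)
          (hA.trans hA₁)
    _ = 2 ^ (p - 1) * (A₁ * B₁ ^ (p - 1)) := by rw [Real.mul_rpow zero_le_two hB₁]; ring
    _ ≤ 2 ^ (p - 1) * max (A₁ * B₁ ^ (p - 1)) (A₂ * B₂ ^ (p - 1)) := by
        gcongr; exact le_max_left _ _

lemma IntervalIntegrable.comp_sub_div {f : ℝ → ℝ} {a b q r : ℝ} (hr : r ≠ 0)
    (hf : IntervalIntegrable f volume ((a - q) / r) ((b - q) / r)) :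
    IntervalIntegrable (fun x => f ((x - q) / r)) volume a b := by
  have := (hf.comp_mul_left (c := r⁻¹)).comp_sub_right q
  simp only [div_inv_eq_mul, div_mul_cancel₀ _ hr, sub_add_cancel] at this
  simpa only [div_eq_inv_mul] using this

lemma apProduct_comp_sub_div (p : ℝ) (w : ℝ → ℝ) {r : ℝ} (hr : r ≠ 0) (q a b : ℝ) :
    apProduct p (fun x => w ((x - q) / r)) a b = apProduct p w ((a - q) / r) ((b - q) / r) := by
  have key : ∀ F : ℝ → ℝ, (b - a)⁻¹ * ∫ x in a..b, F ((x - q) / r) =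
      ((b - q) / r - (a - q) / r)⁻¹ * ∫ y in (a - q) / r..(b - q) / r, F y := by
    intro F
    rw [integral_comp_sub_right (fun u => F (u / r)) q, integral_comp_div F hr, smul_eq_mul,
      show (b - q) / r - (a - q) / r = (b - a) / r by ring, inv_div]
    ring
  simp only [apProduct, key w, key fun y => w y ^ (1 / (1 - p))]

lemma rpow_le_mul_rpow_of_mem_Icc {u v c₁ c₂ s : ℝ} (hc₁ : 0 < c₁) (hs : s ≤ 0) (hv : 0 ≤ v)
    (hu : u ∈ Icc (c₁ * v) (c₂ * v)) : u ^ s ≤ c₁ ^ s * v ^ s := by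
  rw [← Real.mul_rpow hc₁.le hv]
  rcases hv.eq_or_lt with rfl | hv
  · simp only [mul_zero] at hu ⊢
    rw [le_antisymm hu.2 hu.1]
  · exact Real.rpow_le_rpow_of_nonpos (by positivity) hu.1 hs

lemma min_mem_Icc_mul_min_one {L F u : ℝ} (hu : 0 ≤ u) (hF : L / 2 ≤ F ∧ F ≤ 2 * L) :
    min F (2 * L * u) ∈ Icc (L / 2 * min 1 u) (2 * L * min 1 u) := by
  have hL : 0 ≤ L := by linarith [hF.1, hF.2]
  rw [mul_min_of_nonneg _ _ (by linarith), mul_min_of_nonneg _ _ (by linarith), mul_one, mul_one]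
  exact ⟨min_le_min hF.1 (by nlinarith), min_le_min hF.2 le_rfl⟩

namespace IsApWeight

variable {p K K₁ K₂ : ℝ} {w w₁ w₂ : ℝ → ℝ}

protected lemma min (hp : 1 < p) (h₁ : IsApWeight p K₁ w₁) (h₂ : IsApWeight p K₂ w₂) :
    IsApWeight p (2 ^ (p - 1) * max K₁ K₂) fun x => min (w₁ x) (w₂ x) := by
  have hmeas : Measurable fun x => min (w₁ x) (w₂ x) := h₁.measurable.min h₂.measurable
  have hnonneg : ∀ x, 0 ≤ min (w₁ x) (w₂ x) := fun x => le_min (h₁.nonneg x) (h₂.nonneg x)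
  have hint : ∀ a b, IntervalIntegrable (fun x => min (w₁ x) (w₂ x)) volume a b :=
    fun a b => (h₁.intervalIntegrable a b).mono_fun hmeas.aestronglyMeasurable <|
      ae_of_all _ fun x => by
        simp only [Real.norm_of_nonneg (hnonneg x), Real.norm_of_nonneg (h₁.nonneg x)]
        exact min_le_left _ _
  have hint_rpow : ∀ a b,
      IntervalIntegrable (fun x => min (w₁ x) (w₂ x) ^ (1 / (1 - p))) volume a b :=
    fun a b => ((h₁.intervalIntegrable_rpow a b).add (h₂.intervalIntegrable_rpow a b)).mono_fun
      (hmeas.pow_const _).aestronglyMeasurable <| ae_of_all _ fun x => by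
        dsimp only
        rw [Real.norm_of_nonneg (Real.rpow_nonneg (hnonneg x) _), Real.norm_of_nonneg
          (add_nonneg (Real.rpow_nonneg (h₁.nonneg x) _) (Real.rpow_nonneg (h₂.nonneg x) _))]
        exact min_rpow_le_rpow_add_rpow (h₁.nonneg x) (h₂.nonneg x)
  refine ⟨hmeas, hnonneg, hint, hint_rpow, fun a b hab => ?_⟩
  have hB : (b - a)⁻¹ * ∫ x in a..b, min (w₁ x) (w₂ x) ^ (1 / (1 - p)) ≤
      (b - a)⁻¹ * (∫ x in a..b, w₁ x ^ (1 / (1 - p))) +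
        (b - a)⁻¹ * ∫ x in a..b, w₂ x ^ (1 / (1 - p)) := by
    rw [← mul_add, ← integral_add (h₁.intervalIntegrable_rpow a b)
      (h₂.intervalIntegrable_rpow a b)]
    exact inv_sub_mul_integral_mono hab (hint_rpow a b)
      ((h₁.intervalIntegrable_rpow a b).add (h₂.intervalIntegrable_rpow a b))
      fun x _ => min_rpow_le_rpow_add_rpow (h₁.nonneg x) (h₂.nonneg x)
  calc apProduct p (fun x => min (w₁ x) (w₂ x)) a b
      ≤ 2 ^ (p - 1) * max (apProduct p w₁ a b) (apProduct p w₂ a b) :=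
        mul_rpow_le_two_rpow_mul_max hp.le
          (inv_sub_mul_integral_nonneg hab fun x _ => hnonneg x)
          (inv_sub_mul_integral_nonneg hab fun x _ => Real.rpow_nonneg (hnonneg x) _)
          (inv_sub_mul_integral_nonneg hab fun x _ => Real.rpow_nonneg (h₁.nonneg x) _)
          (inv_sub_mul_integral_nonneg hab fun x _ => Real.rpow_nonneg (h₂.nonneg x) _)
          (inv_sub_mul_integral_mono hab (hint a b) (h₁.intervalIntegrable a b)
            fun x _ => min_le_left _ _)
          (inv_sub_mul_integral_mono hab (hint a b) (h₂.intervalIntegrable a b)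
            fun x _ => min_le_right _ _)
          hB
    _ ≤ 2 ^ (p - 1) * max K₁ K₂ := by
        gcongr
        exacts [h₁.apProduct_le a b hab, h₂.apProduct_le a b hab]

protected lemma comp_sub_div (hw : IsApWeight p K w) (q : ℝ) {r : ℝ} (hr : 0 < r) :
    IsApWeight p K fun x => w ((x - q) / r) where
  measurable := hw.measurable.comp (by fun_prop)
  nonneg _ := hw.nonneg _
  intervalIntegrable _ _ := (hw.intervalIntegrable _ _).comp_sub_div hr.ne'
  intervalIntegrable_rpow _ _ := (hw.intervalIntegrable_rpow _ _).comp_sub_div hr.ne'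
  apProduct_le a b hab := by
    rw [apProduct_comp_sub_div p w hr.ne']
    exact hw.apProduct_le _ _ (by gcongr)

lemma apProduct_le_of_mem_Icc (hw : IsApWeight p K w) (hp : 1 < p) {h : ℝ → ℝ}
    (hh : Measurable h) {c₁ c₂ : ℝ} (hc₁ : 0 < c₁) (hc₂ : 0 ≤ c₂) {a b : ℝ} (hab : a < b)
    (hbound : ∀ x ∈ Icc a b, h x ∈ Icc (c₁ * w x) (c₂ * w x)) :
    apProduct p h a b ≤ c₂ / c₁ * K := by
  set s := 1 / (1 - p)
  have hs : s * (p - 1) = -1 := by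
    simp only [s]; field_simp [show 1 - p ≠ 0 by linarith]; ring
  have hs₀ : s ≤ 0 := div_nonpos_of_nonneg_of_nonpos zero_le_one (by linarith)
  have hh₀ : ∀ x ∈ Icc a b, 0 ≤ h x :=
    fun x hx => (mul_nonneg hc₁.le (hw.nonneg x)).trans (hbound x hx).1
  have hh_rpow : ∀ x ∈ Icc a b, h x ^ s ≤ c₁ ^ s * w x ^ s :=
    fun x hx => rpow_le_mul_rpow_of_mem_Icc hc₁ hs₀ (hw.nonneg x) (hbound x hx)
  have hmem : ∀ᵐ x ∂volume.restrict (uIoc a b), x ∈ Icc a b := by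
    filter_upwards [ae_restrict_mem measurableSet_uIoc] with x hx
    rw [uIoc_of_le hab.le] at hx
    exact Ioc_subset_Icc_self hx
  have hint_w := (hw.intervalIntegrable a b).const_mul c₂
  have hint_w_rpow := (hw.intervalIntegrable_rpow a b).const_mul (c₁ ^ s)
  have hint : IntervalIntegrable h volume a b :=
    hint_w.mono_fun hh.aestronglyMeasurable <| hmem.mono fun x hx => by
      show ‖h x‖ ≤ ‖c₂ * w x‖
      rw [Real.norm_of_nonneg (hh₀ x hx), Real.norm_of_nonneg (mul_nonneg hc₂ (hw.nonneg x))]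
      exact (hbound x hx).2
  have hint_rpow : IntervalIntegrable (fun x => h x ^ s) volume a b :=
    hint_w_rpow.mono_fun (hh.pow_const s).aestronglyMeasurable <| hmem.mono fun x hx => by
      show ‖h x ^ s‖ ≤ ‖c₁ ^ s * w x ^ s‖
      rw [Real.norm_of_nonneg (Real.rpow_nonneg (hh₀ x hx) s),
        Real.norm_of_nonneg ((Real.rpow_nonneg (hh₀ x hx) s).trans (hh_rpow x hx))]
      exact hh_rpow x hx
  have hA := inv_sub_mul_integral_mono hab hint hint_w fun x hx => (hbound x hx).2
  have hB := inv_sub_mul_integral_mono hab hint_rpow hint_w_rpow hh_rpow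
  rw [intervalIntegral.integral_const_mul, mul_left_comm] at hA hB
  calc apProduct p h a b
      ≤ (c₂ * ((b - a)⁻¹ * ∫ x in a..b, w x)) *
          (c₁ ^ s * ((b - a)⁻¹ * ∫ x in a..b, w x ^ s)) ^ (p - 1) :=
        apProduct_le_mul_rpow hp.le (inv_sub_mul_integral_nonneg hab hh₀) hA
          (inv_sub_mul_integral_nonneg hab fun x hx => Real.rpow_nonneg (hh₀ x hx) s) hB
    _ = c₂ / c₁ * apProduct p w a b := by
        rw [Real.mul_rpow (Real.rpow_nonneg hc₁.le s)
          (inv_sub_mul_integral_nonneg hab fun x _ => Real.rpow_nonneg (hw.nonneg x) s),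
          ← Real.rpow_mul hc₁.le, hs, Real.rpow_neg_one, apProduct]
        ring
    _ ≤ c₂ / c₁ * K := by
        gcongr
        exact hw.apProduct_le a b hab

end IsApWeight

/-- a uniform local `A_p` estimate for `h = min{f, 2L|(x-q)/r|^α}`,
with constant depending only on `α` and `p`. -/
theorem stmt_1 (α p : ℝ) (hα : 0 < α) (hp : 1 + α < p) :
    ∃ C > 0, ∀ (q R L r : ℝ) (f : ℝ → ℝ), 0 < R → 0 < L → 0 < r → r < R →
      Measurable f →
      (∀ x ∈ Set.Ioo (q - R) (q + R), L / 2 ≤ f x ∧ f x ≤ 2 * L) →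
      ∀ a b : ℝ, a < b → Set.Icc a b ⊆ Set.Ioo (q - R) (q + R) →
      ((b - a)⁻¹ * ∫ x in a..b, min (f x) (2 * L * |(x - q) / r| ^ α)) *
        ((b - a)⁻¹ *
            ∫ x in a..b, (min (f x) (2 * L * |(x - q) / r| ^ α)) ^ (1 / (1 - p))) ^ (p - 1)
        ≤ C := by
  obtain ⟨K, hK, hw⟩ : ∃ K > 0, IsApWeight p K fun y => min 1 (|y| ^ α) :=
    ⟨_, by positivity,
      (isApWeight_one p).min (by linarith) (isApWeight_abs_rpow hα.le (by linarith))⟩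
  refine ⟨4 * K, by positivity, fun q R L r f _ hL hr _ hf hfb a b hab hI => ?_⟩
  calc _ ≤ 2 * L / (L / 2) * K :=
        (hw.comp_sub_div q hr).apProduct_le_of_mem_Icc (by linarith) (hf.min (by fun_prop))
          (by positivity) (by positivity) hab
          fun x hx => min_mem_Icc_mul_min_one (by positivity) (hfb x (hI hx))
    _ = 4 * K := by field_simp; ring
end

section
/- Let μ be a locally finite Borel measure on ℝ with Lebesgue decomposition μ = f_a·L¹ + μ_s (μ_s singular). Let p > 1 and [a,b] ⊂ ℝ with a < b, and let γ_{[a,b]}(t) = t be the identity curve on [a,b]. Then Mod_{p,μ}({γ_{[a,b]}}) > 0 if and only if f_a^{1/(1-p)} is Lebesgue integrable on [a,b]. -/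
/-!
The modulus can be computed exactly: `Mod_{p,μ}({γ_{[a,b]}}) = (∫_a^b f_a^{1/(1-p)})^{1-p}`.
The singular part costs nothing, since an admissible `g` may be cut down to a Lebesgue-conull set
that `μ_s` does not charge. For the absolutely continuous part, Hölder's inequality applied to
`g = (g f_a^{1/p}) · f_a^{-1/p}` gives the lower bound, and the normalised extremal densities
`f_a^{1/(1-p)}` (truncated to have finite integral, then passing to the limit) give the upper bound.
As `1 - p < 0`, this value is positive exactly when the integral is finite.
-/

open MeasureTheory Set
open scoped ENNReal

noncomputable section

/-- The `p`-modulus (with respect to `μ`) of the singleton family consisting of the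
identity curve `γ_{[a,b]}(t) = t` on `[a,b]` (whose metric speed is `1`). -/
def ModSingle (μ : Measure ℝ) (p a b : ℝ) : ℝ≥0∞ :=
  ⨅ (g : ℝ → ℝ≥0∞) (_ : Measurable g) (_ : 1 ≤ ∫⁻ x in Set.Icc a b, g x),
    ∫⁻ x, g x ^ p ∂μ

namespace ENNReal

theorem rpow_pos_iff_ne_top_of_neg {x : ℝ≥0∞} {y : ℝ} (hy : y < 0) : 0 < x ^ y ↔ x ≠ ⊤ := by
  simp [pos_iff_ne_zero, rpow_eq_zero_iff, hy, not_lt.2 hy.le]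

theorem tendsto_inf_natCast_atTop (t : ℝ≥0∞) :
    Filter.Tendsto (fun n : ℕ => t ⊓ n) Filter.atTop (nhds t) := by
  have := tendsto_atTop_iSup fun m n (hmn : m ≤ n) => inf_le_inf_left t (Nat.cast_le.2 hmn)
  rwa [← inf_iSup_eq, iSup_natCast, inf_top_eq] at this

theorem mul_rpow_le_of_le_rpow_one_div_one_sub {w h : ℝ≥0∞} {p : ℝ} (hp : 1 < p)
    (hh : h ≤ w ^ (1 / (1 - p))) : w * h ^ p ≤ h := by
  have he : 1 / (1 - p) < 0 := one_div_neg.2 (by linarith)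
  rcases eq_or_ne h 0 with rfl | h0
  · simp [zero_rpow_of_pos (by linarith : 0 < p)]
  rcases eq_or_ne h ⊤ with rfl | htop
  · have hw : w = 0 :=
      ((rpow_eq_top_iff.1 (top_le_iff.1 hh)).resolve_right fun h => not_lt.2 he.le h.2).1
    simp [hw]
  calc w * h ^ p = w * h ^ (p - 1) * h := by
        conv_lhs => rw [← sub_add_cancel p 1, rpow_add _ _ h0 htop, rpow_one, ← mul_assoc]
    _ ≤ w * w⁻¹ * h := by
        gcongr
        calc h ^ (p - 1) ≤ (w ^ (1 / (1 - p))) ^ (p - 1) := rpow_le_rpow hh (by linarith)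
          _ = w⁻¹ := by
            rw [← rpow_mul, ← rpow_neg_one]
            congr 1
            field_simp [show 1 - p ≠ 0 by linarith]
            ring
    _ ≤ h := mul_le_of_le_one_left' (ENNReal.mul_inv_le_one w)

theorem rpow_lintegral_le_lintegral_mul_rpow_mul {α : Type*} [MeasurableSpace α]
    {ν : Measure α} {p : ℝ} (hp : 1 < p) {w g : α → ℝ≥0∞} (hw : AEMeasurable w ν)
    (hg : AEMeasurable g ν) (hw0 : ∀ᵐ x ∂ν, w x ≠ 0) (hwtop : ∀ᵐ x ∂ν, w x ≠ ⊤) :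
    (∫⁻ x, g x ∂ν) ^ p ≤
      (∫⁻ x, w x * g x ^ p ∂ν) * (∫⁻ x, w x ^ (1 / (1 - p)) ∂ν) ^ (p - 1) := by
  have hp0 : 0 < p := by linarith
  have hpq := Real.HolderConjugate.conjExponent hp
  have hsplit : ∫⁻ x, g x ∂ν = ∫⁻ x, g x * w x ^ (1 / p) * w x ^ (-(1 / p)) ∂ν := by
    refine lintegral_congr_ae ?_
    filter_upwards [hw0, hwtop] with x h0 htop
    rw [mul_assoc, ← rpow_add _ _ h0 htop, add_neg_cancel, rpow_zero, mul_one]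
  have holder := lintegral_mul_le_Lp_mul_Lq ν hpq (f := fun x => g x * w x ^ (1 / p))
    (g := fun x => w x ^ (-(1 / p))) (hg.mul (hw.pow_const _)) (hw.pow_const _)
  simp only [Pi.mul_apply] at holder
  have hfirst : ∀ x, (g x * w x ^ (1 / p)) ^ p = w x * g x ^ p := fun x => by
    rw [mul_rpow_of_nonneg _ _ hp0.le, ← rpow_mul, one_div_mul_cancel hp0.ne', rpow_one, mul_comm]
  have hsecond : ∀ x, (w x ^ (-(1 / p))) ^ p.conjExponent = w x ^ (1 / (1 - p)) := fun x => by
    rw [← rpow_mul, Real.conjExponent]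
    congr 1
    field_simp [show p - 1 ≠ 0 by linarith, show 1 - p ≠ 0 by linarith]
    ring
  simp only [hfirst, hsecond, ← hsplit] at holder
  calc (∫⁻ x, g x ∂ν) ^ p
      ≤ ((∫⁻ x, w x * g x ^ p ∂ν) ^ (1 / p) *
          (∫⁻ x, w x ^ (1 / (1 - p)) ∂ν) ^ (1 / p.conjExponent)) ^ p :=
        rpow_le_rpow holder hp0.le
    _ = _ := by
        rw [mul_rpow_of_nonneg _ _ hp0.le, ← rpow_mul, ← rpow_mul, one_div_mul_cancel hp0.ne',
          rpow_one, Real.conjExponent]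
        congr 2
        field_simp [show p - 1 ≠ 0 by linarith]

end ENNReal

section ModSingle

variable {μ ν : Measure ℝ} {p a b : ℝ}

theorem modSingle_le {g : ℝ → ℝ≥0∞} (hg : Measurable g) (hadm : 1 ≤ ∫⁻ x in Icc a b, g x) :
    ModSingle μ p a b ≤ ∫⁻ x, g x ^ p ∂μ :=
  iInf₂_le_of_le g hg (iInf_le _ hadm)

theorem le_modSingle {c : ℝ≥0∞}
    (h : ∀ g : ℝ → ℝ≥0∞, Measurable g → 1 ≤ ∫⁻ x in Icc a b, g x → c ≤ ∫⁻ x, g x ^ p ∂μ) :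
    c ≤ ModSingle μ p a b :=
  le_iInf₂ fun g hg => le_iInf (h g hg)

theorem modSingle_mono (hμν : μ ≤ ν) : ModSingle μ p a b ≤ ModSingle ν p a b :=
  le_modSingle fun _ hg hadm => (modSingle_le hg hadm).trans (lintegral_mono' hμν le_rfl)

theorem modSingle_add_of_mutuallySingular {μs : Measure ℝ} (hs : μs ⟂ₘ volume) (hp : 0 < p) :
    ModSingle (ν + μs) p a b = ModSingle ν p a b := by
  refine le_antisymm (le_modSingle fun g hg hadm => ?_)
    (modSingle_mono (Measure.le_add_right le_rfl))
  obtain ⟨S, hS, hμsS, hvolS⟩ := hs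
  have hgS : S.indicator g =ᵐ[volume] g := by
    filter_upwards [(ae_iff.2 hvolS : ∀ᵐ x ∂volume, x ∈ S)] with x hx
    exact indicator_of_mem hx g
  have hpow : (fun x => S.indicator g x ^ p) = S.indicator fun x => g x ^ p :=
    (indicator_comp_of_zero (g := fun t : ℝ≥0∞ => t ^ p) (ENNReal.zero_rpow_of_pos hp)).symm
  calc ModSingle (ν + μs) p a b ≤ ∫⁻ x, S.indicator g x ^ p ∂(ν + μs) :=
        modSingle_le (hg.indicator hS) (by rwa [lintegral_congr_ae (ae_restrict_of_ae hgS)])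
    _ = ∫⁻ x in S, g x ^ p ∂ν := by
        rw [hpow, lintegral_add_measure, lintegral_indicator hS, lintegral_indicator hS,
          setLIntegral_measure_zero _ _ hμsS, add_zero]
    _ ≤ ∫⁻ x, g x ^ p ∂ν := setLIntegral_le_lintegral _ _

end ModSingle

section WithDensity

variable {w : ℝ → ℝ≥0∞} {p a b : ℝ}

theorem le_modSingle_withDensity (hw : Measurable w) (hp : 1 < p)
    (hwtop : ∀ᵐ x ∂volume.restrict (Icc a b), w x ≠ ⊤) :
    (∫⁻ x in Icc a b, w x ^ (1 / (1 - p))) ^ (1 - p) ≤ ModSingle (volume.withDensity w) p a b := by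
  set I := ∫⁻ x in Icc a b, w x ^ (1 / (1 - p))
  rcases eq_or_ne I ⊤ with hI | hI
  · rw [hI, ENNReal.top_rpow_of_neg (by linarith)]
    exact zero_le
  have hw0 : ∀ᵐ x ∂volume.restrict (Icc a b), w x ≠ 0 := by
    filter_upwards [ae_lt_top (hw.pow_const _) hI] with x hx h0
    rw [h0, ENNReal.zero_rpow_of_neg (one_div_neg.2 (by linarith))] at hx
    exact hx.ne rfl
  refine le_modSingle fun g hg hadm => ?_
  set A := ∫⁻ x in Icc a b, w x * g x ^ p
  have hone : 1 ≤ A * I ^ (p - 1) :=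
    calc 1 ≤ (∫⁻ x in Icc a b, g x) ^ p := ENNReal.one_le_rpow hadm (by linarith)
      _ ≤ A * I ^ (p - 1) := ENNReal.rpow_lintegral_le_lintegral_mul_rpow_mul hp
          hw.aemeasurable hg.aemeasurable hw0 hwtop
  have hI0 : I ^ (p - 1) ≠ 0 := by
    rintro h
    simp [h] at hone
  calc I ^ (1 - p) = (I ^ (p - 1))⁻¹ := by rw [← ENNReal.rpow_neg, neg_sub]
    _ ≤ A := (ENNReal.inv_le_iff_le_mul (fun _ => hI0)
        fun h => absurd h (ENNReal.rpow_ne_top_of_nonneg (by linarith) hI)).2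
          (by rwa [mul_comm])
    _ = ∫⁻ x in Icc a b, g x ^ p ∂volume.withDensity w := by
        rw [restrict_withDensity measurableSet_Icc,
          lintegral_withDensity_eq_lintegral_mul _ hw (hg.pow_const p)]
        rfl
    _ ≤ ∫⁻ x, g x ^ p ∂volume.withDensity w := setLIntegral_le_lintegral _ _

theorem modSingle_withDensity_le {h : ℝ → ℝ≥0∞} (hw : Measurable w) (hh : Measurable h)
    (hp : 1 < p) (hle : ∀ x, h x ≤ w x ^ (1 / (1 - p))) (hJ : ∫⁻ x in Icc a b, h x ≠ ⊤) :
    ModSingle (volume.withDensity w) p a b ≤ (∫⁻ x in Icc a b, h x) ^ (1 - p) := by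
  set J := ∫⁻ x in Icc a b, h x
  rcases eq_or_ne J 0 with hJ0 | hJ0
  · rw [hJ0, ENNReal.zero_rpow_of_neg (by linarith)]
    exact le_top
  set g := (Icc a b).indicator fun x => h x * J⁻¹
  have hg : Measurable g := (hh.mul_const _).indicator measurableSet_Icc
  have hadm : 1 ≤ ∫⁻ x in Icc a b, g x := by
    rw [setLIntegral_congr_fun measurableSet_Icc fun x hx => indicator_of_mem hx _,
      lintegral_mul_const _ hh, ENNReal.mul_inv_cancel hJ0 hJ]
  have hpointwise : ∀ x, w x * g x ^ p ≤ (Icc a b).indicator (fun x => h x * J⁻¹ ^ p) x := by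
    intro x
    by_cases hx : x ∈ Icc a b
    · rw [indicator_of_mem hx, show g x = h x * J⁻¹ from indicator_of_mem hx _,
        ENNReal.mul_rpow_of_nonneg _ _ (by linarith), ← mul_assoc]
      exact mul_le_mul_left (ENNReal.mul_rpow_le_of_le_rpow_one_div_one_sub hp (hle x)) _
    · simp [g, hx, ENNReal.zero_rpow_of_pos (by linarith : 0 < p)]
  calc ModSingle (volume.withDensity w) p a b ≤ ∫⁻ x, g x ^ p ∂volume.withDensity w :=
        modSingle_le hg hadm
    _ = ∫⁻ x, w x * g x ^ p := lintegral_withDensity_eq_lintegral_mul _ hw (hg.pow_const p)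
    _ ≤ ∫⁻ x, (Icc a b).indicator (fun x => h x * J⁻¹ ^ p) x := lintegral_mono hpointwise
    _ = J ^ (1 - p) := by
        rw [lintegral_indicator measurableSet_Icc, lintegral_mul_const _ hh, ENNReal.inv_rpow,
          ← ENNReal.rpow_neg, sub_eq_add_neg, ENNReal.rpow_add _ _ hJ0 hJ, ENNReal.rpow_one]

theorem modSingle_withDensity (hw : Measurable w) (hp : 1 < p)
    (hwtop : ∀ᵐ x ∂volume.restrict (Icc a b), w x ≠ ⊤) :
    ModSingle (volume.withDensity w) p a b =
      (∫⁻ x in Icc a b, w x ^ (1 / (1 - p))) ^ (1 - p) := by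
  refine le_antisymm ?_ (le_modSingle_withDensity hw hp hwtop)
  set h : ℕ → ℝ → ℝ≥0∞ := fun n x => w x ^ (1 / (1 - p)) ⊓ n
  have hh : ∀ n, Measurable (h n) := fun n => (hw.pow_const _).inf measurable_const
  have hJ : ∀ n, ∫⁻ x in Icc a b, h n x ≠ ⊤ := fun n =>
    ne_top_of_le_ne_top (by simp [ENNReal.mul_eq_top])
      (lintegral_mono fun x => inf_le_right)
  have hlim : Filter.Tendsto (fun n => ∫⁻ x in Icc a b, h n x) Filter.atTop
      (nhds (∫⁻ x in Icc a b, w x ^ (1 / (1 - p)))) :=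
    lintegral_tendsto_of_tendsto_of_monotone (fun n => (hh n).aemeasurable)
      (ae_of_all _ fun x m n hmn => inf_le_inf_left _ (Nat.cast_le.2 hmn))
      (ae_of_all _ fun x => ENNReal.tendsto_inf_natCast_atTop _)
  exact ge_of_tendsto' ((ENNReal.continuous_rpow_const.tendsto _).comp hlim) fun n =>
    modSingle_withDensity_le hw (hh n) hp (fun x => inf_le_left) (hJ n)

end WithDensity

theorem stmt_7_general (μ : Measure ℝ) [IsLocallyFiniteMeasure μ]
    (fa : ℝ → ℝ≥0∞) (hfa : Measurable fa) (μs : Measure ℝ)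
    (hsing : μs ⟂ₘ volume) (hdecomp : μ = volume.withDensity fa + μs)
    (p : ℝ) (hp : 1 < p) (a b : ℝ) :
    0 < ModSingle μ p a b ↔ (∫⁻ x in Set.Icc a b, fa x ^ (1 / (1 - p))) < ⊤ := by
  have hfa_le : ∫⁻ x in Icc a b, fa x ≤ μ (Icc a b) := by
    rw [← withDensity_apply _ measurableSet_Icc, hdecomp]
    exact Measure.le_add_right le_rfl _
  have hfa_top : ∀ᵐ x ∂volume.restrict (Icc a b), fa x ≠ ⊤ :=
    (ae_lt_top hfa (ne_top_of_le_ne_top isCompact_Icc.measure_lt_top.ne hfa_le)).mono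
      fun _ => LT.lt.ne
  rw [hdecomp, modSingle_add_of_mutuallySingular hsing (by linarith),
    modSingle_withDensity hfa hp hfa_top, ENNReal.rpow_pos_iff_ne_top_of_neg (by linarith),
    lt_top_iff_ne_top]

/-- `Mod_{p,μ}({γ_{[a,b]}}) > 0` iff `f_a^{1/(1-p)}` is Lebesgue integrable
on `[a,b]` (with the convention `0^{1/(1-p)} = ∞`, built into `ℝ≥0∞`-valued `rpow`). -/
theorem stmt_7 (μ : Measure ℝ) [IsLocallyFiniteMeasure μ]
    (fa : ℝ → ℝ≥0∞) (hfa : Measurable fa) (μs : Measure ℝ)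
    (hsing : μs ⟂ₘ volume) (hdecomp : μ = volume.withDensity fa + μs)
    (p : ℝ) (hp : 1 < p) (a b : ℝ) (hab : a < b) :
    0 < ModSingle μ p a b ↔ (∫⁻ x in Set.Icc a b, fa x ^ (1 / (1 - p))) < ⊤ :=
  stmt_7_general μ fa hfa μs hsing hdecomp p hp a b
end
end

section
/- Let μ be a locally finite Borel measure on ℝ with absolutely continuous part f_a·L¹, let p > 1, and let a < b. Suppose f_a^{1/(1-p)} is Lebesgue integrable on [a,b]. Then for every Borel g : ℝ → [0,∞), ∫_a^b g(x) dx ≤ (∫_a^b g(x)^p f_a(x) dx)^{1/p} · (∫_a^b f_a(x)^{1/(1-p)} dx)^{1/q}, where 1/p + 1/q = 1. Consequently Mod_{p,μ}({γ_{[a,b]}})^{1/p} ≥ (∫_a^b f_a^{1/(1-p)} dx)^{-1/q} > 0. -/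
/-! Writing `g = (g w^{1/p}) · w^{-1/p}`, Hölder's inequality bounds `∫ g` by
`(∫ g^p w)^{1/p} (∫ w^{-q/p})^{1/q}`, and `-q/p = 1/(1-p)` for conjugate exponents. The absolutely
continuous part of a locally finite measure has an a.e. finite density on `[a,b]`, and integrability
of `w^{1/(1-p)}` forces `w ≠ 0` a.e., so the factorisation is valid a.e. For an admissible `g`
the left side is at least `1` and `∫ g^p w ≤ ∫ g^p dμ`, which gives the lower bound on the modulus. -/

open MeasureTheory Set
open scoped ENNReal

noncomputable section

theorem Real.HolderConjugate.neg_one_div_mul_eq {p q : ℝ} (hpq : p.HolderConjugate q) :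
    -(1 / p) * q = 1 / (1 - p) := by
  have h1p : 1 - p ≠ 0 := fun h => hpq.sub_one_ne_zero (by linarith)
  have := hpq.sub_one_mul_conj
  field_simp [hpq.ne_zero]
  linarith

section

variable {α : Type*} [MeasurableSpace α] {ν : Measure α} {w : α → ℝ≥0∞}

theorem ae_ne_zero_of_lintegral_rpow_ne_top (hw : AEMeasurable w ν) {r : ℝ} (hr : r < 0)
    (h : ∫⁻ x, w x ^ r ∂ν ≠ ⊤) : ∀ᵐ x ∂ν, w x ≠ 0 := by
  filter_upwards [ae_lt_top' (hw.pow_const r) h] with x hx hx0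
  rw [hx0, ENNReal.zero_rpow_of_neg hr] at hx
  exact lt_irrefl _ hx

theorem ae_restrict_ne_top_of_withDensity_le {μ : Measure α} (hw : Measurable w)
    (hle : ν.withDensity w ≤ μ) {s : Set α} (hs : MeasurableSet s) (hμs : μ s ≠ ⊤) :
    ∀ᵐ x ∂ν.restrict s, w x ≠ ⊤ := by
  refine (ae_lt_top hw ?_).mono fun _ hx => hx.ne
  rw [← withDensity_apply _ hs]
  exact ne_top_of_le_ne_top hμs (hle s)

theorem lintegral_le_weighted_Lp_mul_Lq {p q : ℝ} (hpq : p.HolderConjugate q)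
    {g : α → ℝ≥0∞} (hg : AEMeasurable g ν) (hw : AEMeasurable w ν)
    (hw0 : ∀ᵐ x ∂ν, w x ≠ 0) (hwtop : ∀ᵐ x ∂ν, w x ≠ ⊤) :
    ∫⁻ x, g x ∂ν ≤
      (∫⁻ x, g x ^ p * w x ∂ν) ^ (1 / p) * (∫⁻ x, w x ^ (1 / (1 - p)) ∂ν) ^ (1 / q) := by
  have hfactor : (fun x => g x) =ᵐ[ν] fun x => g x * w x ^ (1 / p) * w x ^ (-(1 / p)) := by
    filter_upwards [hw0, hwtop] with x hx0 hxtop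
    rw [mul_assoc, ← ENNReal.rpow_add _ _ hx0 hxtop, add_neg_cancel, ENNReal.rpow_zero, mul_one]
  have hleft : ∀ x, (g x * w x ^ (1 / p)) ^ p = g x ^ p * w x := fun x => by
    rw [ENNReal.mul_rpow_of_nonneg _ _ hpq.nonneg, ← ENNReal.rpow_mul,
      one_div_mul_cancel hpq.ne_zero, ENNReal.rpow_one]
  have hright : ∀ x, (w x ^ (-(1 / p))) ^ q = w x ^ (1 / (1 - p)) := fun x => by
    rw [← ENNReal.rpow_mul, hpq.neg_one_div_mul_eq]
  calc ∫⁻ x, g x ∂ν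
      = ∫⁻ x, g x * w x ^ (1 / p) * w x ^ (-(1 / p)) ∂ν := lintegral_congr_ae hfactor
    _ ≤ (∫⁻ x, (g x * w x ^ (1 / p)) ^ p ∂ν) ^ (1 / p) *
          (∫⁻ x, (w x ^ (-(1 / p))) ^ q ∂ν) ^ (1 / q) :=
        ENNReal.lintegral_mul_le_Lp_mul_Lq _ hpq (hg.mul (hw.pow_const _)) (hw.pow_const _)
    _ = _ := by simp only [hleft, hright]

theorem setLIntegral_mul_le_lintegral_of_withDensity_le {μ : Measure α} (hw : Measurable w)
    (hle : ν.withDensity w ≤ μ) {g : α → ℝ≥0∞} (hg : Measurable g) {s : Set α}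
    (hs : MeasurableSet s) : ∫⁻ x in s, g x * w x ∂ν ≤ ∫⁻ x, g x ∂μ :=
  calc ∫⁻ x in s, g x * w x ∂ν = ∫⁻ x in s, g x ∂ν.withDensity w := by
        rw [setLIntegral_withDensity_eq_setLIntegral_mul _ hw hg hs]
        simp only [Pi.mul_apply, mul_comm]
    _ ≤ ∫⁻ x, g x ∂μ := lintegral_mono' (Measure.restrict_le_self.trans hle) le_rfl

end

theorem ENNReal.rpow_neg_le_of_one_le_mul_rpow {x y : ℝ≥0∞} {r : ℝ} (hr : 0 ≤ r) (hy : y ≠ ⊤)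
    (h : 1 ≤ x * y ^ r) : y ^ (-r) ≤ x := by
  have hyr : y ^ r ≠ ⊤ := ENNReal.rpow_ne_top_of_nonneg hr hy
  rw [ENNReal.rpow_neg, ENNReal.inv_le_iff_le_mul _ fun h' => absurd h' hyr, mul_comm]
  · exact h
  · rintro - hy0
    simp [hy0] at h

theorem le_modSingle_rpow {μ : Measure ℝ} {p a b : ℝ} (hp : 0 < p) {c : ℝ≥0∞}
    (h : ∀ g : ℝ → ℝ≥0∞, Measurable g → 1 ≤ ∫⁻ x in Icc a b, g x →
      c ≤ (∫⁻ x, g x ^ p ∂μ) ^ (1 / p)) :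
    c ≤ ModSingle μ p a b ^ (1 / p) := by
  rw [one_div, ENNReal.le_rpow_inv_iff hp]
  refine le_iInf₂ fun g hg => le_iInf fun hg1 => ?_
  rw [← ENNReal.le_rpow_inv_iff hp, ← one_div]
  exact h g hg hg1

theorem stmt_8_general (μ : Measure ℝ) [IsLocallyFiniteMeasure μ]
    (fa : ℝ → ℝ≥0∞) (hfa : Measurable fa) (μs : Measure ℝ)
    (hdecomp : μ = volume.withDensity fa + μs)
    (p q : ℝ) (hp : 1 < p) (hq : 1 / p + 1 / q = 1) (a b : ℝ)
    (hint : (∫⁻ x in Set.Icc a b, fa x ^ (1 / (1 - p))) < ⊤) :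
    (∀ g : ℝ → ℝ≥0∞, Measurable g →
      (∫⁻ x in Set.Icc a b, g x) ≤
        (∫⁻ x in Set.Icc a b, g x ^ p * fa x) ^ (1 / p) *
          (∫⁻ x in Set.Icc a b, fa x ^ (1 / (1 - p))) ^ (1 / q)) ∧
    (∫⁻ x in Set.Icc a b, fa x ^ (1 / (1 - p))) ^ (-(1 / q)) ≤ ModSingle μ p a b ^ (1 / p) ∧
    0 < ModSingle μ p a b := by
  have hpq : p.HolderConjugate q := Real.holderConjugate_iff.mpr ⟨hp, by simpa [one_div] using hq⟩
  have hle : volume.withDensity fa ≤ μ := hdecomp ▸ Measure.le_add_right le_rfl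
  have hholder : ∀ g : ℝ → ℝ≥0∞, Measurable g → _ := fun g hg =>
    lintegral_le_weighted_Lp_mul_Lq hpq hg.aemeasurable hfa.aemeasurable
      (ae_ne_zero_of_lintegral_rpow_ne_top hfa.aemeasurable
        (one_div_neg.mpr (sub_neg.mpr hp)) hint.ne)
      (ae_restrict_ne_top_of_withDensity_le hfa hle measurableSet_Icc
        isCompact_Icc.measure_lt_top.ne)
  have hmod : (∫⁻ x in Icc a b, fa x ^ (1 / (1 - p))) ^ (-(1 / q)) ≤
      ModSingle μ p a b ^ (1 / p) :=
    le_modSingle_rpow hpq.pos fun g hg hg1 =>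
      (ENNReal.rpow_neg_le_of_one_le_mul_rpow (one_div_nonneg.mpr hpq.symm.nonneg) hint.ne
        (hg1.trans (hholder g hg))).trans
      (ENNReal.rpow_le_rpow (setLIntegral_mul_le_lintegral_of_withDensity_le hfa hle
        (hg.pow_const p) measurableSet_Icc) (one_div_nonneg.mpr hpq.nonneg))
  refine ⟨hholder, hmod, pos_iff_ne_zero.mpr fun hzero => ?_⟩
  rw [hzero, ENNReal.zero_rpow_of_pos (one_div_pos.mpr hpq.pos), nonpos_iff_eq_zero,
    ENNReal.rpow_neg, ENNReal.inv_eq_zero] at hmod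
  exact ENNReal.rpow_ne_top_of_nonneg (one_div_nonneg.mpr hpq.symm.nonneg) hint.ne hmod

/-- the weighted Hölder inequality
`∫_a^b g ≤ (∫_a^b g^p f_a)^{1/p} (∫_a^b f_a^{1/(1-p)})^{1/q}` and the resulting lower
bound `Mod_{p,μ}({γ_{[a,b]}})^{1/p} ≥ (∫_a^b f_a^{1/(1-p)})^{-1/q} > 0`. -/
theorem stmt_8 (μ : Measure ℝ) [IsLocallyFiniteMeasure μ]
    (fa : ℝ → ℝ≥0∞) (hfa : Measurable fa) (μs : Measure ℝ)
    (hsing : μs ⟂ₘ volume) (hdecomp : μ = volume.withDensity fa + μs)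
    (p q : ℝ) (hp : 1 < p) (hq : 1 / p + 1 / q = 1) (a b : ℝ) (hab : a < b)
    (hint : (∫⁻ x in Set.Icc a b, fa x ^ (1 / (1 - p))) < ⊤) :
    (∀ g : ℝ → ℝ≥0∞, Measurable g →
      (∫⁻ x in Set.Icc a b, g x) ≤
        (∫⁻ x in Set.Icc a b, g x ^ p * fa x) ^ (1 / p) *
          (∫⁻ x in Set.Icc a b, fa x ^ (1 / (1 - p))) ^ (1 / q)) ∧
    (∫⁻ x in Set.Icc a b, fa x ^ (1 / (1 - p))) ^ (-(1 / q)) ≤ ModSingle μ p a b ^ (1 / p) ∧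
    0 < ModSingle μ p a b :=
  stmt_8_general μ fa hfa μs hdecomp p q hp hq a b hint
end
end

section
/- Let μ be a locally finite Borel measure on ℝ with Lebesgue decomposition μ = f_a·L¹ + μ_s, where μ_s is concentrated on a Lebesgue-null set N. Let p > 1 and a < b, and suppose f_a^{1/(1-p)} is NOT Lebesgue integrable on [a,b]. Then Mod_{p,μ}({γ_{[a,b]}}) = 0. -/
open MeasureTheory Set
open scoped ENNReal

noncomputable section

/-!
Put `c = 1 / (1 - p) < 0`, so that `c (p - 1) = -1`. The truncations `h_n = min (f_a ^ c) n`
then satisfy `h_n ^ p * f_a ≤ h_n`. Testing the modulus with `h_n` restricted to `[a,b] \ N` and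
normalised by `I_n = ∫_a^b h_n < ∞` gives `Mod ≤ I_n ^ (1 - p)`: the singular part does not see
the complement of `N`, and the absolutely continuous part contributes at most `I_n`. By monotone
convergence `I_n → ∫_a^b f_a ^ c = ∞`, hence `Mod = 0`.
-/

open Filter Topology

theorem ENNReal.rpow_mul_le_of_le_rpow_one_div_one_sub {p : ℝ} (hp : 1 < p) {x y : ℝ≥0∞}
    (hy : y ≤ x ^ (1 / (1 - p))) : y ^ p * x ≤ y := by
  rcases eq_or_ne y 0 with rfl | hy0
  · simp [ENNReal.zero_rpow_of_pos (by linarith : 0 < p)]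
  rcases eq_or_ne y ⊤ with rfl | hytop
  · exact le_top
  have hexp : 1 / (1 - p) * (p - 1) = -1 := by
    field_simp [show 1 - p ≠ 0 by linarith]
    ring
  calc y ^ p * x = y * y ^ (p - 1) * x := by
        conv_lhs =>
          rw [show p = 1 + (p - 1) by ring, ENNReal.rpow_add _ _ hy0 hytop, ENNReal.rpow_one]
    _ ≤ y * x⁻¹ * x := by
        gcongr
        calc y ^ (p - 1) ≤ (x ^ (1 / (1 - p))) ^ (p - 1) := ENNReal.rpow_le_rpow hy (by linarith)
          _ = x⁻¹ := by rw [← ENNReal.rpow_mul, hexp, ENNReal.rpow_neg_one]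
    _ = y * (x⁻¹ * x) := mul_assoc _ _ _
    _ ≤ y := mul_le_of_le_one_right' (ENNReal.inv_mul_le_one x)

theorem ModSingle_le_lintegral_rpow {μ : Measure ℝ} {p a b : ℝ} {g : ℝ → ℝ≥0∞}
    (hg : Measurable g) (hadm : 1 ≤ ∫⁻ x in Icc a b, g x) :
    ModSingle μ p a b ≤ ∫⁻ x, g x ^ p ∂μ :=
  iInf₂_le_of_le g hg (iInf_le _ hadm)

theorem ModSingle_le_rpow_one_sub {μ : Measure ℝ} {p a b : ℝ} (hp : 0 ≤ p) {g : ℝ → ℝ≥0∞}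
    (hg : Measurable g) (h0 : ∫⁻ x in Icc a b, g x ≠ 0) (htop : ∫⁻ x in Icc a b, g x ≠ ⊤)
    (henergy : ∫⁻ x, g x ^ p ∂μ ≤ ∫⁻ x in Icc a b, g x) :
    ModSingle μ p a b ≤ (∫⁻ x in Icc a b, g x) ^ (1 - p) := by
  set I := ∫⁻ x in Icc a b, g x
  have hadm : 1 ≤ ∫⁻ x in Icc a b, g x * I⁻¹ := by
    rw [lintegral_mul_const _ hg, ENNReal.mul_inv_cancel h0 htop]
  calc ModSingle μ p a b ≤ ∫⁻ x, (g x * I⁻¹) ^ p ∂μ :=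
        ModSingle_le_lintegral_rpow (by fun_prop) hadm
    _ = (∫⁻ x, g x ^ p ∂μ) * I ^ (-p) := by
        simp_rw [ENNReal.mul_rpow_of_nonneg _ _ hp, ENNReal.inv_rpow, ← ENNReal.rpow_neg]
        exact lintegral_mul_const _ (by fun_prop)
    _ ≤ I * I ^ (-p) := by gcongr
    _ = I ^ (1 - p) := by rw [sub_eq_add_neg, ENNReal.rpow_add _ _ h0 htop, ENNReal.rpow_one]

theorem setLIntegral_rpow_withDensity_add_le {ν μs : Measure ℝ} {f h : ℝ → ℝ≥0∞} {A : Set ℝ}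
    {p : ℝ} (hf : Measurable f) (hh : Measurable h) (hA : MeasurableSet A) (hμsA : μs A = 0)
    (hle : ∀ x ∈ A, h x ^ p * f x ≤ h x) :
    ∫⁻ x in A, h x ^ p ∂(ν.withDensity f + μs) ≤ ∫⁻ x in A, h x ∂ν := by
  rw [Measure.restrict_add, lintegral_add_measure, Measure.restrict_eq_zero.2 hμsA,
    lintegral_zero_measure, add_zero, restrict_withDensity hA,
    lintegral_withDensity_eq_lintegral_mul _ hf (by fun_prop)]
  exact setLIntegral_mono hh fun x hx => (mul_comm _ _).trans_le (hle x hx)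

theorem tendsto_lintegral_min_natCast {α : Type*} [MeasurableSpace α] {μ : Measure α}
    {f : α → ℝ≥0∞} (hf : AEMeasurable f μ) :
    Tendsto (fun n : ℕ => ∫⁻ x, min (f x) n ∂μ) atTop (𝓝 (∫⁻ x, f x ∂μ)) := by
  refine lintegral_tendsto_of_tendsto_of_monotone (fun n => hf.min aemeasurable_const)
    (ae_of_all _ fun x m n hmn => min_le_min_left _ (Nat.cast_le.2 hmn)) (ae_of_all _ fun x => ?_)
  simpa using tendsto_const_nhds.min ENNReal.tendsto_nat_nhds_top

theorem ModSingle_withDensity_add_le {f h : ℝ → ℝ≥0∞} {μs : Measure ℝ} {N : Set ℝ}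
    {p a b : ℝ} (hp : 0 < p) (hf : Measurable f) (hh : Measurable h) (hN : MeasurableSet N)
    (hNnull : volume N = 0) (hconc : μs Nᶜ = 0) (hle : ∀ x, h x ^ p * f x ≤ h x)
    (h0 : ∫⁻ x in Icc a b, h x ≠ 0) (htop : ∫⁻ x in Icc a b, h x ≠ ⊤) :
    ModSingle (volume.withDensity f + μs) p a b ≤ (∫⁻ x in Icc a b, h x) ^ (1 - p) := by
  set A := Icc a b \ N
  have hA : MeasurableSet A := measurableSet_Icc.diff hN
  have hIA : ∫⁻ x in Icc a b, A.indicator h x = ∫⁻ x in Icc a b, h x := by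
    refine lintegral_congr_ae ?_
    filter_upwards [ae_restrict_mem measurableSet_Icc,
      ae_restrict_of_ae (measure_eq_zero_iff_ae_notMem.1 hNnull)] with x hxI hxN
    exact indicator_of_mem (mem_sdiff_of_mem hxI hxN) h
  rw [← hIA] at h0 htop ⊢
  refine ModSingle_le_rpow_one_sub hp.le (hh.indicator hA) h0 htop ?_
  have hpow : (fun x => A.indicator h x ^ p) = A.indicator fun x => h x ^ p :=
    (indicator_comp_of_zero (g := fun y : ℝ≥0∞ => y ^ p) (ENNReal.zero_rpow_of_pos hp)).symm
  calc ∫⁻ x, A.indicator h x ^ p ∂(volume.withDensity f + μs)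
      = ∫⁻ x in A, h x ^ p ∂(volume.withDensity f + μs) := by
        rw [hpow, lintegral_indicator hA]
    _ ≤ ∫⁻ x in A, h x := setLIntegral_rpow_withDensity_add_le hf hh hA
        (measure_mono_null (fun x hx => hx.2) hconc) fun x _ => hle x
    _ ≤ ∫⁻ x in Icc a b, h x := lintegral_mono_set sdiff_subset
    _ = ∫⁻ x in Icc a b, A.indicator h x := hIA.symm

theorem stmt_9_general (μ : Measure ℝ)
    (fa : ℝ → ℝ≥0∞) (hfa : Measurable fa) (μs : Measure ℝ) (N : Set ℝ)
    (hN : MeasurableSet N) (hNnull : volume N = 0) (hconc : μs Nᶜ = 0)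
    (hdecomp : μ = volume.withDensity fa + μs)
    (p : ℝ) (hp : 1 < p) (a b : ℝ)
    (hnotint : (∫⁻ x in Set.Icc a b, fa x ^ (1 / (1 - p))) = ⊤) :
    ModSingle μ p a b = 0 := by
  set h : ℕ → ℝ → ℝ≥0∞ := fun n x => min (fa x ^ (1 / (1 - p))) n
  have hh : ∀ n, Measurable (h n) := fun n => by fun_prop
  have hlim : Tendsto (fun n => ∫⁻ x in Icc a b, h n x) atTop (𝓝 ⊤) :=
    hnotint ▸ tendsto_lintegral_min_natCast (by fun_prop)
  have hfin : ∀ n, ∫⁻ x in Icc a b, h n x ≠ ⊤ := fun n =>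
    (setLIntegral_lt_top_of_le_nnreal measure_Icc_lt_top.ne ⟨n, fun _ _ => min_le_right _ _⟩).ne
  have hbound : ∀ᶠ n in atTop, ModSingle μ p a b ≤ (∫⁻ x in Icc a b, h n x) ^ (1 - p) := by
    filter_upwards [hlim.eventually_ne ENNReal.top_ne_zero] with n hn0
    exact hdecomp ▸ ModSingle_withDensity_add_le (by linarith) hfa (hh n) hN hNnull hconc
      (fun x => ENNReal.rpow_mul_le_of_le_rpow_one_div_one_sub hp (min_le_left _ _)) hn0 (hfin n)
  have hzero : Tendsto (fun n => (∫⁻ x in Icc a b, h n x) ^ (1 - p)) atTop (𝓝 0) := by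
    have := (ENNReal.continuous_rpow_const (y := 1 - p)).tendsto ⊤ |>.comp hlim
    rwa [ENNReal.top_rpow_of_neg (by linarith)] at this
  exact le_antisymm (ge_of_tendsto hzero hbound) zero_le

/-- if `f_a^{1/(1-p)}` is not Lebesgue integrable on `[a,b]` then
`Mod_{p,μ}({γ_{[a,b]}}) = 0`. -/
theorem stmt_9 (μ : Measure ℝ) [IsLocallyFiniteMeasure μ]
    (fa : ℝ → ℝ≥0∞) (hfa : Measurable fa) (μs : Measure ℝ) (N : Set ℝ)
    (hN : MeasurableSet N) (hNnull : volume N = 0) (hconc : μs Nᶜ = 0)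
    (hsing : μs ⟂ₘ volume) (hdecomp : μ = volume.withDensity fa + μs)
    (p : ℝ) (hp : 1 < p) (a b : ℝ) (hab : a < b)
    (hnotint : (∫⁻ x in Set.Icc a b, fa x ^ (1 / (1 - p))) = ⊤) :
    ModSingle μ p a b = 0 :=
  stmt_9_general μ fa hfa μs N hN hNnull hconc hdecomp p hp a b hnotint
end
end

section
/- Let μ be a locally finite Borel measure on ℝ with absolutely continuous part f_a·L¹, p > 1, N_p as before, and f : ℝ → ℝ Lipschitz. If g : ℝ → [0,∞) is a bounded Borel p-upper gradient of f with respect to μ, then g(x) ≥ |f'(x)| for L¹-almost every x ∈ N_p. -/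
/-!
Let `x ∈ N_p`, witnessed by `ε`, and `0 < δ ≤ ε`. For every `ρ` admissible for the segment
`[x - δ, x + δ]`, Hölder's inequality with the weight `f_a` gives
`1 ≤ ∫ ρ ≤ (∫ f_a ρ^p)^(1/p) (∫ f_a^(1/(1-p)))^(1/q)` with `1/p + 1/q = 1`, and the last
integral is finite. So the segment has positive `p`-modulus, the upper gradient inequality
holds along it, and `|f (x + δ) - f (x - δ)| ≤ ∫_{x-δ}^{x+δ} g`. At points where `f` is
differentiable (Rademacher) and which are Lebesgue points of `g`, dividing by `2δ` and
letting `δ → 0` gives `|f' x| ≤ g x`.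
-/

open MeasureTheory Set
open scoped ENNReal

noncomputable section

/-- An absolutely continuous curve in a metric space, together with its metric speed. -/
structure ACCurve (X : Type*) [MetricSpace X] where
  a : ℝ
  b : ℝ
  hab : a ≤ b
  toFun : ℝ → X
  cont : ContinuousOn toFun (Set.Icc a b)
  speed : ℝ → ℝ
  speed_nonneg : ∀ t, 0 ≤ speed t
  speed_integrable : IntegrableOn speed (Set.Icc a b)
  dist_le : ∀ s t, a ≤ s → s ≤ t → t ≤ b →
    dist (toFun s) (toFun t) ≤ ∫ u in s..t, speed u
  speed_min : ∀ g : ℝ → ℝ, IntegrableOn g (Set.Icc a b) →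
    (∀ s t, a ≤ s → s ≤ t → t ≤ b → dist (toFun s) (toFun t) ≤ ∫ u in s..t, g u) →
    ∀ᵐ t ∂(volume.restrict (Set.Icc a b)), speed t ≤ g t

/-- The curve integral `∫_γ g` of a nonnegative Borel function. -/
def acCurveIntegral {X : Type*} [MetricSpace X] (γ : ACCurve X) (g : X → ℝ≥0∞) : ℝ≥0∞ :=
  ∫⁻ t in Set.Icc γ.a γ.b, g (γ.toFun t) * ENNReal.ofReal (γ.speed t)

/-- The `p`-modulus of a family of absolutely continuous curves. -/
def pModulus {X : Type*} [MetricSpace X] [MeasurableSpace X] (m : Measure X) (p : ℝ)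
    (Γ : Set (ACCurve X)) : ℝ≥0∞ :=
  ⨅ (g : X → ℝ≥0∞) (_ : Measurable g) (_ : ∀ γ ∈ Γ, 1 ≤ acCurveIntegral γ g),
    ∫⁻ x, g x ^ p ∂m

/-- `g` is a `p`-upper gradient of `f`: the upper gradient inequality holds along
`p`-a.e. curve. -/
def IsPUpperGradient {X : Type*} [MetricSpace X] [MeasurableSpace X] (m : Measure X) (p : ℝ)
    (f : X → ℝ) (g : X → ℝ≥0∞) : Prop :=
  Measurable g ∧
    pModulus m p {γ : ACCurve X |
      ¬ ENNReal.ofReal |f (γ.toFun γ.b) - f (γ.toFun γ.a)| ≤ acCurveIntegral γ g} = 0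

open Filter Topology

theorem HasDerivAt.tendsto_symmetric_slope {E : Type*} [NormedAddCommGroup E] [NormedSpace ℝ E]
    {f : ℝ → E} {f' : E} {x : ℝ} (h : HasDerivAt f f' x) :
    Tendsto (fun δ : ℝ => (2 * δ)⁻¹ • (f (x + δ) - f (x - δ))) (𝓝[>] 0) (𝓝 f') := by
  have hleft := h.tendsto_slope_zero_left.comp (neg_zero (G := ℝ) ▸ tendsto_neg_nhdsGT_neg)
  have hsum := ((h.tendsto_slope_zero_right.add hleft).const_smul (2⁻¹ : ℝ))
  rw [← two_smul ℝ f', smul_smul, inv_mul_cancel₀ two_ne_zero, one_smul] at hsum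
  refine hsum.congr' (eventually_mem_nhdsWithin.mono fun δ (hδ : 0 < δ) => ?_)
  simp only [Function.comp_apply, ← sub_eq_add_neg, inv_neg, neg_smul, ← smul_neg, neg_sub,
    ← smul_add, smul_smul, mul_inv]
  congr 1
  abel

theorem ae_tendsto_average_Icc {h : ℝ → ℝ} (hh : LocallyIntegrable h) :
    ∀ᵐ x, Tendsto (fun δ : ℝ => (2 * δ)⁻¹ * ∫ y in Icc (x - δ) (x + δ), h y)
      (𝓝[>] 0) (𝓝 (h x)) := by
  filter_upwards [IsUnifLocDoublingMeasure.ae_tendsto_average (μ := volume) hh 1] with x hx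
  refine (hx (fun _ => x) (fun δ => δ) tendsto_id
    (eventually_mem_nhdsWithin.mono fun δ (hδ : 0 < δ) => ?_)).congr' ?_
  · simpa using hδ.le
  · filter_upwards [eventually_mem_nhdsWithin] with δ (hδ : 0 < δ)
    rw [setAverage_eq, Real.closedBall_eq_Icc, Real.volume_real_Icc_of_le (by linarith),
      smul_eq_mul]
    ring_nf

theorem ae_le_of_mul_sub_le_intervalIntegral {a b c : ℝ} {h : ℝ → ℝ}
    (hint : IntegrableOn h (Icc a b))
    (hle : ∀ s t, a ≤ s → s ≤ t → t ≤ b → c * (t - s) ≤ ∫ u in s..t, h u) :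
    ∀ᵐ t ∂volume.restrict (Icc a b), c ≤ h t := by
  rw [← Measure.restrict_congr_set Ioo_ae_eq_Icc, ae_restrict_iff' measurableSet_Ioo]
  filter_upwards [ae_tendsto_average_Icc
    ((integrable_indicator_iff measurableSet_Icc).2 hint).locallyIntegrable] with t ht htI
  have hsmall : ∀ᶠ δ in 𝓝[>] (0 : ℝ), 0 < δ ∧ a ≤ t - δ ∧ t + δ ≤ b := by
    filter_upwards [Ioc_mem_nhdsGT (lt_min (sub_pos.2 htI.1) (sub_pos.2 htI.2))]
      with δ ⟨hδ, hδm⟩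
    refine ⟨hδ, ?_, ?_⟩ <;> linarith [min_le_left (t - a) (b - t), min_le_right (t - a) (b - t)]
  have hev : ∀ᶠ δ in 𝓝[>] (0 : ℝ),
      c ≤ (2 * δ)⁻¹ * ∫ y in Icc (t - δ) (t + δ), (Icc a b).indicator h y := by
    filter_upwards [hsmall] with δ ⟨hδ, hδa, hδb⟩
    rw [setIntegral_indicator measurableSet_Icc,
      inter_eq_left.2 (Icc_subset_Icc hδa hδb), integral_Icc_eq_integral_Ioc,
      ← intervalIntegral.integral_of_le (by linarith), ← div_eq_inv_mul, le_div_iff₀ (by linarith)]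
    linarith [hle _ _ hδa (by linarith) hδb]
  simpa [indicator_of_mem (Ioo_subset_Icc_self htI)] using ge_of_tendsto ht hev

namespace ACCurve

def segment (a b : ℝ) (hab : a ≤ b) : ACCurve ℝ where
  a := a
  b := b
  hab := hab
  toFun := id
  cont := continuousOn_id
  speed := fun _ => 1
  speed_nonneg := fun _ => zero_le_one
  speed_integrable := integrableOn_const measure_Icc_lt_top.ne
  dist_le := fun s t _ hst _ => by
    rw [id, id, Real.dist_eq, abs_sub_comm, abs_of_nonneg (sub_nonneg.2 hst)]
    simp
  speed_min := fun g hg hle => ae_le_of_mul_sub_le_intervalIntegral hg fun s t hs hst ht => by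
    have := hle s t hs hst ht
    rw [id, id, Real.dist_eq, abs_sub_comm, abs_of_nonneg (sub_nonneg.2 hst)] at this
    rwa [one_mul]

end ACCurve

theorem acCurveIntegral_segment {a b : ℝ} (hab : a ≤ b) (ρ : ℝ → ℝ≥0∞) :
    acCurveIntegral (ACCurve.segment a b hab) ρ = ∫⁻ t in Icc a b, ρ t := by
  simp [acCurveIntegral, ACCurve.segment]

theorem lintegral_le_weighted_holder {α : Type*} [MeasurableSpace α] {ν : Measure α} {p q : ℝ}
    (hpq : p.HolderConjugate q) {w ρ : α → ℝ≥0∞} (hw : AEMeasurable w ν)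
    (hρ : AEMeasurable ρ ν) (hw0 : ∀ᵐ t ∂ν, w t ≠ 0) (hwtop : ∀ᵐ t ∂ν, w t ≠ ⊤) :
    ∫⁻ t, ρ t ∂ν ≤
      (∫⁻ t, w t * ρ t ^ p ∂ν) ^ (1 / p) * (∫⁻ t, w t ^ (1 - q) ∂ν) ^ (1 / q) := by
  have hp0 := hpq.pos
  have hsplit : ∀ᵐ t ∂ν, ρ t = (ρ t * w t ^ (1 / p)) * w t ^ (-(1 / p)) := by
    filter_upwards [hw0, hwtop] with t h0 htop
    rw [mul_assoc, ← ENNReal.rpow_add _ _ h0 htop, add_neg_cancel, ENNReal.rpow_zero, mul_one]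
  have hexp : -(1 / p) * q = 1 - q := by
    have := hpq.inv_add_inv_eq_one
    field_simp [hpq.ne_zero, hpq.symm.ne_zero] at this ⊢
    linarith
  calc ∫⁻ t, ρ t ∂ν = ∫⁻ t, (ρ t * w t ^ (1 / p)) * w t ^ (-(1 / p)) ∂ν := lintegral_congr_ae hsplit
    _ ≤ (∫⁻ t, (ρ t * w t ^ (1 / p)) ^ p ∂ν) ^ (1 / p) *
          (∫⁻ t, (w t ^ (-(1 / p))) ^ q ∂ν) ^ (1 / q) :=
        ENNReal.lintegral_mul_le_Lp_mul_Lq ν hpq (hρ.mul (hw.pow_const _)) (hw.pow_const _)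
    _ = _ := by
        congr 3 <;> funext t
        · rw [ENNReal.mul_rpow_of_nonneg _ _ hp0.le, ← ENNReal.rpow_mul,
            one_div_mul_cancel hp0.ne', ENNReal.rpow_one, mul_comm]
        · rw [← ENNReal.rpow_mul, hexp]

section Modulus

variable {X : Type*} [MetricSpace X] [MeasurableSpace X]

theorem pModulus_mono {m : Measure X} {p : ℝ} {Γ Γ' : Set (ACCurve X)} (h : Γ ⊆ Γ') :
    pModulus m p Γ ≤ pModulus m p Γ' :=
  iInf_mono fun _ => iInf_mono fun _ => iInf_mono' fun hadm => ⟨fun γ hγ => hadm γ (h hγ), le_rfl⟩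

theorem pModulus_mono_measure {m m' : Measure X} (h : m ≤ m') (p : ℝ) (Γ : Set (ACCurve X)) :
    pModulus m p Γ ≤ pModulus m' p Γ :=
  iInf_mono fun _ => iInf_mono fun _ => iInf_mono fun _ => lintegral_mono' h le_rfl

theorem IsPUpperGradient.le_acCurveIntegral {m : Measure X} {p : ℝ} {f : X → ℝ}
    {g : X → ℝ≥0∞} (hg : IsPUpperGradient m p f g) {γ : ACCurve X}
    (hγ : 0 < pModulus m p {γ}) :
    ENNReal.ofReal |f (γ.toFun γ.b) - f (γ.toFun γ.a)| ≤ acCurveIntegral γ g := by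
  by_contra hbad
  exact hγ.ne' (le_antisymm ((pModulus_mono (singleton_subset_iff.2 hbad)).trans_eq hg.2) bot_le)

end Modulus

theorem pModulus_withDensity_segment_pos {w : ℝ → ℝ≥0∞} (hw : Measurable w) {p : ℝ}
    (hp : 1 < p) {a b : ℝ} (hab : a ≤ b) (hwtop : ∀ᵐ t ∂volume.restrict (Icc a b), w t ≠ ⊤)
    (hA : ∫⁻ t in Icc a b, w t ^ (1 / (1 - p)) ≠ ⊤) :
    0 < pModulus (volume.withDensity w) p {ACCurve.segment a b hab} := by
  obtain ⟨q, hpq⟩ : ∃ q, p.HolderConjugate q := ⟨_, .conjExponent hp⟩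
  have hexp : 1 - q = 1 / (1 - p) := by
    rw [hpq.conjugate_eq]
    field_simp [(sub_pos.2 hp).ne', (sub_neg.2 hp).ne]
    ring
  have hw0 : ∀ᵐ t ∂volume.restrict (Icc a b), w t ≠ 0 := by
    filter_upwards [ae_lt_top (hw.pow_const _) hA] with t ht h0
    rw [h0, ENNReal.zero_rpow_of_neg (one_div_neg.2 (sub_neg.2 hp))] at ht
    exact lt_irrefl _ ht
  set E := (∫⁻ t in Icc a b, w t ^ (1 / (1 - p))) ^ (1 / q)
  have hEtop : E ≠ ⊤ := ENNReal.rpow_ne_top_of_nonneg (one_div_pos.2 hpq.symm.pos).le hA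
  refine lt_of_lt_of_le (ENNReal.rpow_pos_of_nonneg (ENNReal.inv_pos.2 hEtop) hpq.pos.le)
    (le_iInf fun ρ => le_iInf fun hρ => le_iInf fun hadm => ?_)
  set B := ∫⁻ t in Icc a b, w t * ρ t ^ p
  have hholder : 1 ≤ B ^ (1 / p) * E := by
    have h1 := hadm _ (mem_singleton _)
    rw [acCurveIntegral_segment] at h1
    refine h1.trans ?_
    simpa only [hexp] using
      lintegral_le_weighted_holder hpq hw.aemeasurable hρ.aemeasurable hw0 hwtop
  have hE0 : E ≠ 0 := fun h => by simp [h] at hholder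
  have hinv : E⁻¹ ≤ B ^ (1 / p) := by
    rw [ENNReal.inv_le_iff_le_mul (fun _ => hE0) (fun h => absurd h hEtop), mul_comm]
    exact hholder
  calc E⁻¹ ^ p ≤ (B ^ (1 / p)) ^ p := ENNReal.rpow_le_rpow hinv hpq.pos.le
    _ = B := by rw [← ENNReal.rpow_mul, one_div_mul_cancel hpq.ne_zero, ENNReal.rpow_one]
    _ ≤ ∫⁻ t, w t * ρ t ^ p := setLIntegral_le_lintegral _ _
    _ = ∫⁻ t, ρ t ^ p ∂volume.withDensity w :=
        (lintegral_withDensity_eq_lintegral_mul _ hw (hρ.pow_const p)).symm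

theorem abs_deriv_le_of_abs_sub_le_integral {f g : ℝ → ℝ} {x : ℝ} (hf : DifferentiableAt ℝ f x)
    (hg : Tendsto (fun δ : ℝ => (2 * δ)⁻¹ * ∫ y in Icc (x - δ) (x + δ), g y) (𝓝[>] 0)
      (𝓝 (g x)))
    (hle : ∀ᶠ δ in 𝓝[>] (0 : ℝ), |f (x + δ) - f (x - δ)| ≤ ∫ y in Icc (x - δ) (x + δ), g y) :
    |deriv f x| ≤ g x := by
  refine le_of_tendsto_of_tendsto hf.hasDerivAt.tendsto_symmetric_slope.abs hg ?_
  filter_upwards [hle, eventually_mem_nhdsWithin] with δ hδle (hδ : 0 < δ)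
  rw [smul_eq_mul, abs_mul, abs_of_pos (by positivity)]
  exact mul_le_mul_of_nonneg_left hδle (by positivity)

theorem stmt_13_general (μ : Measure ℝ) [IsLocallyFiniteMeasure μ]
    (fa : ℝ → ℝ≥0∞) (hfa : Measurable fa) (μs : Measure ℝ)
    (hdecomp : μ = volume.withDensity fa + μs)
    (p : ℝ) (hp : 1 < p)
    (Np : Set ℝ)
    (hNp : Np = {x : ℝ | ∃ ε > (0 : ℝ),
      (∫⁻ t in Set.Icc (x - ε) (x + ε), fa t ^ (1 / (1 - p))) < ⊤})
    (f : ℝ → ℝ) (K : NNReal) (hf : LipschitzWith K f)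
    (g : ℝ → ℝ) (hgmeas : Measurable g) (hg0 : ∀ x, 0 ≤ g x)
    (hgbd : ∃ M : ℝ, ∀ x, g x ≤ M)
    (hug : IsPUpperGradient μ p f (fun x => ENNReal.ofReal (g x))) :
    ∀ᵐ x ∂volume, x ∈ Np → |deriv f x| ≤ g x := by
  obtain ⟨M, hM⟩ := hgbd
  have hgloc : LocallyIntegrable g := (locallyIntegrable_const M).mono
    hgmeas.aestronglyMeasurable (ae_of_all _ fun x => by
      simpa [abs_of_nonneg (hg0 x)] using (hM x).trans (le_abs_self M))
  have hwμ : volume.withDensity fa ≤ μ := hdecomp ▸ Measure.le_add_right le_rfl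
  have hsegment : ∀ a b (hab : a ≤ b), ∫⁻ t in Icc a b, fa t ^ (1 / (1 - p)) < ⊤ →
      |f b - f a| ≤ ∫ t in Icc a b, g t := by
    intro a b hab hA
    have hfatop : ∀ᵐ t ∂volume.restrict (Icc a b), fa t ≠ ⊤ := by
      have hfin : ∫⁻ t in Icc a b, fa t < ⊤ := by
        rw [← withDensity_apply _ measurableSet_Icc]
        exact (hwμ _).trans_lt measure_Icc_lt_top
      filter_upwards [ae_lt_top hfa hfin.ne] with t ht using ht.ne
    have hmod := (pModulus_withDensity_segment_pos hfa hp hab hfatop hA.ne).trans_le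
      (pModulus_mono_measure hwμ _ _)
    have hgI := hgloc.integrableOn_isCompact (isCompact_Icc (a := a) (b := b))
    have hineq := hug.le_acCurveIntegral hmod
    rwa [acCurveIntegral_segment, ← ofReal_integral_eq_lintegral_ofReal hgI (ae_of_all _ hg0),
      ENNReal.ofReal_le_ofReal_iff (integral_nonneg hg0)] at hineq
  filter_upwards [ae_tendsto_average_Icc hgloc, hf.ae_differentiableAt] with x hx hdx hxNp
  obtain ⟨ε, hε, hA⟩ := hNp ▸ hxNp
  refine abs_deriv_le_of_abs_sub_le_integral hdx hx ?_
  filter_upwards [Ioc_mem_nhdsGT hε] with δ ⟨hδ, hδε⟩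
  exact hsegment _ _ (by linarith)
    ((lintegral_mono_set (Icc_subset_Icc (by linarith) (by linarith))).trans_lt hA)

/-- conversely, a bounded Borel `p`-upper gradient `g` of a Lipschitz
function `f` satisfies `g ≥ |f'|` at `L¹`-a.e. point of `N_p`. -/
theorem stmt_13 (μ : Measure ℝ) [IsLocallyFiniteMeasure μ]
    (fa : ℝ → ℝ≥0∞) (hfa : Measurable fa) (μs : Measure ℝ)
    (hsing : μs ⟂ₘ volume) (hdecomp : μ = volume.withDensity fa + μs)
    (p : ℝ) (hp : 1 < p)
    (Np : Set ℝ)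
    (hNp : Np = {x : ℝ | ∃ ε > (0 : ℝ),
      (∫⁻ t in Set.Icc (x - ε) (x + ε), fa t ^ (1 / (1 - p))) < ⊤})
    (f : ℝ → ℝ) (K : NNReal) (hf : LipschitzWith K f)
    (g : ℝ → ℝ) (hgmeas : Measurable g) (hg0 : ∀ x, 0 ≤ g x)
    (hgbd : ∃ M : ℝ, ∀ x, g x ≤ M)
    (hug : IsPUpperGradient μ p f (fun x => ENNReal.ofReal (g x))) :
    ∀ᵐ x ∂volume, x ∈ Np → |deriv f x| ≤ g x :=
  stmt_13_general μ fa hfa μs hdecomp p hp Np hNp f K hf g hgmeas hg0 hgbd hug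
end
end

section
/- Let α > 0, p > 1 + α, q ∈ ℝ, and L > 0. Let w_{k−1} : ℝ → [0,∞) be Borel with L/2 ≤ w_{k−1} ≤ 2L on [q − 4R, q + 4R] for some R > 0, let 0 < r < R with 8r ≤ ε(R − r) for some ε > 0, set g(x) = 2L|(x−q)/r|^α and w_k = min{w_{k−1}, g}. Then ∫_{q−r}^{q+r} w_k dx ≤ ε ∫_{q+r}^{q+R} w_{k−1} dx and likewise ∫_{q−r}^{q+r} w_k dx ≤ ε ∫_{q−R}^{q−r} w_{k−1} dx. -/
open MeasureTheory Set

/-!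
On `(q - r, q + r)` the truncated weight is at most `w ≤ 2L`, so its mass there is at most
`4rL`; on a side interval of length `R - r` the weight `w ≥ L/2` has mass at least
`(L/2)(R - r)`, and `8r ≤ ε (R - r)` is exactly what makes `4rL ≤ ε (L/2)(R - r)`.
-/

section IntervalBounds

variable {f : ℝ → ℝ} {a b m M : ℝ}

theorem intervalIntegrable_of_measurable_of_mem_Icc (hf : Measurable f) (hab : a ≤ b)
    (h : ∀ x ∈ Icc a b, f x ∈ Icc m M) : IntervalIntegrable f volume a b := by
  refine (intervalIntegrable_const (c := max |m| |M|)).mono_fun hf.aestronglyMeasurable ?_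
  filter_upwards [ae_restrict_mem measurableSet_uIoc] with x hx
  rw [uIoc_of_le hab] at hx
  obtain ⟨hm, hM⟩ := h x (Ioc_subset_Icc_self hx)
  rw [Real.norm_eq_abs, Real.norm_eq_abs, abs_of_nonneg (le_max_of_le_left (abs_nonneg m))]
  exact abs_le_max_abs_abs hm hM

theorem intervalIntegral_mem_Icc_of_mem_Icc (hf : Measurable f) (hab : a ≤ b)
    (h : ∀ x ∈ Icc a b, f x ∈ Icc m M) :
    ∫ x in a..b, f x ∈ Icc (m * (b - a)) (M * (b - a)) := by
  have hfi := intervalIntegrable_of_measurable_of_mem_Icc hf hab h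
  have hconst : ∀ c : ℝ, ∫ _ in a..b, c = c * (b - a) := fun c => by
    rw [intervalIntegral.integral_const, smul_eq_mul, mul_comm]
  constructor
  · rw [← hconst]
    exact intervalIntegral.integral_mono_on hab intervalIntegrable_const hfi fun x hx => (h x hx).1
  · rw [← hconst]
    exact intervalIntegral.integral_mono_on hab hfi intervalIntegrable_const fun x hx => (h x hx).2

end IntervalBounds

theorem integral_min_le_mul_integral_side {w g : ℝ → ℝ} (hw : Measurable w) (hg : Measurable g)
    {q L r R ε a b : ℝ} (hL : 0 < L) (hr : 0 < r) (hε : 0 < ε) (h8 : 8 * r ≤ ε * (R - r))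
    (hside : b - a = R - r) (hab : a ≤ b) (hg0 : ∀ x, 0 ≤ g x)
    (hcenter : ∀ x ∈ Icc (q - r) (q + r), w x ∈ Icc (L / 2) (2 * L))
    (hwside : ∀ x ∈ Icc a b, w x ∈ Icc (L / 2) (2 * L)) :
    ∫ x in (q - r)..(q + r), min (w x) (g x) ≤ ε * ∫ x in a..b, w x := by
  have hmin : ∀ x ∈ Icc (q - r) (q + r), min (w x) (g x) ∈ Icc 0 (2 * L) := fun x hx =>
    ⟨le_min (by linarith [(hcenter x hx).1]) (hg0 x), (min_le_left _ _).trans (hcenter x hx).2⟩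
  have hcusp := (intervalIntegral_mem_Icc_of_mem_Icc (hw.min hg) (by linarith) hmin).2
  have hmass := (intervalIntegral_mem_Icc_of_mem_Icc hw hab hwside).1
  calc ∫ x in (q - r)..(q + r), min (w x) (g x) ≤ 2 * L * (q + r - (q - r)) := hcusp
    _ ≤ ε * (L / 2 * (b - a)) := by rw [hside]; nlinarith
    _ ≤ ε * ∫ x in a..b, w x := mul_le_mul_of_nonneg_left hmass hε.le

theorem stmt_19_general (α q L R r ε : ℝ) (hL : 0 < L)
    (hr : 0 < r) (hrR : r < R) (hε : 0 < ε) (h8 : 8 * r ≤ ε * (R - r))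
    (w : ℝ → ℝ) (hw : Measurable w)
    (hwb : ∀ x ∈ Set.Icc (q - 4 * R) (q + 4 * R), L / 2 ≤ w x ∧ w x ≤ 2 * L) :
    (∫ x in (q - r)..(q + r), min (w x) (2 * L * |(x - q) / r| ^ α)) ≤
        ε * ∫ x in (q + r)..(q + R), w x ∧
    (∫ x in (q - r)..(q + r), min (w x) (2 * L * |(x - q) / r| ^ α)) ≤
        ε * ∫ x in (q - R)..(q - r), w x := by
  have hwR : ∀ x ∈ Icc (q - R) (q + R), w x ∈ Icc (L / 2) (2 * L) := fun x hx =>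
    hwb x (Icc_subset_Icc (by linarith) (by linarith) hx)
  have hcenter : ∀ x ∈ Icc (q - r) (q + r), w x ∈ Icc (L / 2) (2 * L) := fun x hx =>
    hwR x (Icc_subset_Icc (by linarith) (by linarith) hx)
  have hg : Measurable fun x => 2 * L * |(x - q) / r| ^ α := by fun_prop
  have hg0 (x : ℝ) : 0 ≤ 2 * L * |(x - q) / r| ^ α := by positivity
  constructor
  · exact integral_min_le_mul_integral_side hw hg hL hr hε h8 (by ring) (by linarith) hg0
      hcenter fun x hx => hwR x (Icc_subset_Icc (by linarith) le_rfl hx)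
  · exact integral_min_le_mul_integral_side hw hg hL hr hε h8 (by ring) (by linarith) hg0
      hcenter fun x hx => hwR x (Icc_subset_Icc le_rfl (by linarith) hx)

/-- the large-interval perturbation estimate: the mass added by the
truncated cusp weight `w_k = min{w_{k-1}, 2L|(x-q)/r|^α}` on `(q-r, q+r)` is at most an
`ε`-fraction of the mass of `w_{k-1}` on each adjacent side interval. -/
theorem stmt_19 (α p q L R r ε : ℝ) (hα : 0 < α) (hp : 1 + α < p) (hL : 0 < L)
    (hR : 0 < R) (hr : 0 < r) (hrR : r < R) (hε : 0 < ε) (h8 : 8 * r ≤ ε * (R - r))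
    (w : ℝ → ℝ) (hw : Measurable w)
    (hwb : ∀ x ∈ Set.Icc (q - 4 * R) (q + 4 * R), L / 2 ≤ w x ∧ w x ≤ 2 * L) :
    (∫ x in (q - r)..(q + r), min (w x) (2 * L * |(x - q) / r| ^ α)) ≤
        ε * ∫ x in (q + r)..(q + R), w x ∧
    (∫ x in (q - r)..(q + r), min (w x) (2 * L * |(x - q) / r| ^ α)) ≤
        ε * ∫ x in (q - R)..(q - r), w x :=
  stmt_19_general α q L R r ε hL hr hrR hε h8 w hw hwb
end
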